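/- arXiv:1909.07802 — 2 statements merged into one kernel-verified Lean document; each statement's English description precedes it below -/
import Mathlib

section
/- Let δ ∈ K and let f(x) = x^σ + δ·x^(σ^(n−1)). Then f is scattered if and only if there is no nonzero x ∈ K such that ∑_{i=0}^{n−1} z^(e_i) = 0, where z = δ·x^(σ^(n−1)−σ) and e_i = ∑_{j=0}^{i−1} σ^j (so e_0 = 0, e_1 = 1, e_2 = 1+σ, etc.). -/
/-!
Let `τ x = x ^ σ`; as `gcd(s, n) = 1`, its fixed field is `𝔽_q` and `x ^ σ ^ (n - 1) = τ⁻¹ x`.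
Writing `x = y t`, the equation `x f(t) = t f(x)` becomes `τ w = z w` for `w = y - τ⁻¹ y` and
`z = δ t ^ (σ ^ (n - 1) - σ)`, and `y ∈ 𝔽_q` iff `w = 0`. A solution of `τ w = z w` has
`τ^i w = z ^ e_i w`, so its trace is `(∑ z ^ e_i) w`; and `w` has the form `y - τ⁻¹ y` iff its trace
vanishes (additive Hilbert 90). Conversely `∑ z ^ e_i = 0` forces the norm `z ^ e_n` to be `1`, so
multiplicative Hilbert 90 provides `w ≠ 0` with `τ w = z w`. Both Hilbert 90 statements follow by
counting: the image of `a ↦ τ a - a` (resp. `u ↦ u ^ (σ - 1)`) lies in the kernel of the trace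
(resp. norm), and the two have the same size.
-/

open Finset Polynomial

theorem pow_geomSum_succ {M : Type*} [CommMonoid M] (Q i : ℕ) (z : M) :
    z ^ ∑ j ∈ range (i + 1), Q ^ j = (z ^ ∑ j ∈ range i, Q ^ j) ^ Q * z := by
  rw [geom_sum_succ, ← pow_mul, ← pow_succ, mul_comm]

theorem pow_pow_eq_pow_geomSum_mul {M : Type*} [CommMonoid M] {Q : ℕ} {v z : M}
    (h : v ^ Q = z * v) (i : ℕ) : v ^ Q ^ i = z ^ (∑ j ∈ range i, Q ^ j) * v := by
  induction i with
  | zero => simp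
  | succ i ih => rw [pow_succ, pow_mul, ih, mul_pow, h, pow_geomSum_succ, mul_assoc]

theorem sum_pow_pow_eq_mul {R : Type*} [CommSemiring R] {Q : ℕ} {v z : R}
    (h : v ^ Q = z * v) (n : ℕ) :
    ∑ i ∈ range n, v ^ Q ^ i = (∑ i ∈ range n, z ^ ∑ j ∈ range i, Q ^ j) * v := by
  simp_rw [sum_mul, pow_pow_eq_pow_geomSum_mul h]

section FrobeniusPower

variable {R : Type*} [CommRing R] {Q : ℕ}

theorem pow_geomSum_eq_one_of_sum_eq_zero (φ : R →+* R) (hφ : ∀ x, φ x = x ^ Q) {n : ℕ}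
    {z : R} (hz : ∑ i ∈ range n, z ^ ∑ j ∈ range i, Q ^ j = 0) :
    z ^ ∑ j ∈ range n, Q ^ j = 1 := by
  have hshift : ∑ i ∈ range n, z ^ ∑ j ∈ range (i + 1), Q ^ j =
      z * φ (∑ i ∈ range n, z ^ ∑ j ∈ range i, Q ^ j) := by
    simp_rw [map_sum, hφ, pow_geomSum_succ, mul_sum, mul_comm z]
  have := sum_range_succ' (fun i => z ^ ∑ j ∈ range i, Q ^ j) n
  rw [sum_range_succ, hshift, hz, map_zero, mul_zero] at this
  simpa using this

theorem pow_apply_eq_pow_pow (φ : R →+* R) (hφ : ∀ x, φ x = x ^ Q) (i : ℕ) (x : R) :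
    (φ ^ i) x = x ^ Q ^ i := by
  rw [RingHom.coe_pow, show ⇑φ = (· ^ Q) from funext hφ, pow_iterate]

theorem sum_pow_pow_sub_self_eq_zero (φ : R →+* R) (hφ : ∀ x, φ x = x ^ Q) {n : ℕ} {a : R}
    (ha : a ^ Q ^ n = a) :
    ∑ i ∈ range n, (a ^ Q - a) ^ Q ^ i = 0 := by
  have hterm : ∀ i, (a ^ Q - a) ^ Q ^ i = a ^ Q ^ (i + 1) - a ^ Q ^ i := fun i => by
    rw [← pow_apply_eq_pow_pow φ hφ, map_sub, pow_apply_eq_pow_pow φ hφ,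
      pow_apply_eq_pow_pow φ hφ, ← pow_mul, ← pow_succ']
  simp_rw [hterm, sum_range_sub (fun i => a ^ Q ^ i), ha, pow_zero, pow_one, sub_self]

theorem sum_eq_zero_of_pow_sub_eq_mul [IsDomain R] {n : ℕ}
    (φ : R →+* R) (hφ : ∀ x, φ x = x ^ Q) (hn : n ≠ 0) (hper : ∀ x : R, x ^ Q ^ n = x)
    {y z : R} (hy : y ^ Q ≠ y) (h : y ^ Q - y = z * (y - y ^ Q ^ (n - 1))) :
    ∑ i ∈ range n, z ^ ∑ j ∈ range i, Q ^ j = 0 := by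
  set a := y ^ Q ^ (n - 1)
  have ha : y = a ^ Q := by
    rw [← pow_mul, ← pow_succ, Nat.sub_add_cancel (Nat.one_le_iff_ne_zero.2 hn), hper]
  have hw : (y - a) ^ Q = z * (y - a) := by
    rw [← hφ, map_sub, hφ, hφ, ← ha, h]
  have hw0 : y - a ≠ 0 := fun h0 => hy (sub_eq_zero.1 (by rw [h, h0, mul_zero]))
  have htr := sum_pow_pow_eq_mul hw n
  rw [ha, sum_pow_pow_sub_self_eq_zero φ hφ (hper a)] at htr
  exact (mul_eq_zero.1 htr.symm).resolve_right (ha ▸ hw0)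

end FrobeniusPower

@[to_additive Function.Periodic.sum_range_mul_left_of_coprime]
theorem Function.Periodic.prod_range_mul_left_of_coprime {M : Type*} [CommMonoid M]
    {f : ℕ → M} {n s : ℕ} (hf : Function.Periodic f n) (hsn : s.Coprime n) :
    ∏ i ∈ range n, f (s * i) = ∏ i ∈ range n, f i := by
  rcases Nat.lt_or_ge n 2 with hn | hn
  · interval_cases n <;> simp
  obtain ⟨m, -, hm⟩ := Nat.exists_mul_mod_eq_one_of_coprime hsn (by omega)
  have hinv : ∀ {a b : ℕ}, a * b % n = 1 → ∀ i < n, a * (b * i % n) % n = i := by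
    intro a b hab i hi
    rw [Nat.mul_mod, Nat.mod_mod, ← Nat.mul_mod, ← mul_assoc, Nat.mul_mod, hab, one_mul,
      Nat.mod_mod, Nat.mod_eq_of_lt hi]
  refine prod_nbij' (fun i => s * i % n) (fun i => m * i % n) ?_ ?_ ?_ ?_ ?_
  · simp [Nat.mod_lt _ (by omega : 0 < n)]
  · simp [Nat.mod_lt _ (by omega : 0 < n)]
  · intro i hi
    exact hinv (by rwa [mul_comm]) i (mem_range.1 hi)
  · intro i hi
    exact hinv hm i (mem_range.1 hi)
  · intro i _
    exact (hf.map_mod_nat _).symm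

@[to_additive AddMonoidHom.mem_range_of_card_mul_card_ker_le]
theorem MonoidHom.mem_range_of_card_mul_card_ker_le {G H : Type*} [Group G] [Group H]
    [Finite G] (f : G →* H) {S : Finset H} (hfS : ∀ g, f g ∈ S)
    (hS : #S * Nat.card f.ker ≤ Nat.card G) {h : H} (hh : h ∈ S) : h ∈ f.range := by
  have hcard : Nat.card f.ker * Nat.card f.range = Nat.card G := by
    rw [← f.ker.card_mul_index, Subgroup.index_ker]
  have hrange : (f.range : Set H) ⊆ S := by
    rintro _ ⟨g, rfl⟩
    exact hfS g
  have hle : #S ≤ Nat.card f.range :=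
    Nat.le_of_mul_le_mul_right (hS.trans (by rw [← hcard, mul_comm])) Nat.card_pos
  have := Set.eq_of_subset_of_ncard_le hrange (by
    rw [Set.ncard_coe_finset]; exact hle.trans (Nat.card_coe_set_eq _).le)
  exact (this ▸ hh : h ∈ (f.range : Set H))

theorem Polynomial.card_filter_eval_eq_zero_le {R : Type*} [CommRing R] [IsDomain R] [Fintype R]
    [DecidableEq R] {P : R[X]} (hP : P ≠ 0) : #{x | P.eval x = 0} ≤ P.natDegree :=
  card_le_degree_of_subset_roots fun x hx => by
    simpa [mem_roots hP] using (mem_filter.1 hx).2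

theorem card_filter_sum_pow_pow_eq_zero_le {K : Type*} [Field K] [Fintype K] [DecidableEq K]
    {q n : ℕ} (hq : 1 < q) (hn : n ≠ 0) :
    #{x : K | ∑ i ∈ range n, x ^ q ^ i = 0} ≤ q ^ (n - 1) := by
  set P : K[X] := ∑ i ∈ range n, X ^ q ^ i
  have hP : P.coeff (q ^ (n - 1)) = 1 := by
    simp [P, finsetSum_coeff, coeff_X_pow, (Nat.pow_right_injective hq).eq_iff, hn]
  have hdeg : P.natDegree ≤ q ^ (n - 1) := natDegree_sum_le_of_forall_le _ _ fun i hi => by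
    rw [natDegree_X_pow]
    exact Nat.pow_le_pow_right (by omega) (by have := mem_range.1 hi; omega)
  have := card_filter_eval_eq_zero_le (P := P) (by rintro h; simp [h] at hP)
  simpa [P, eval_finsetSum] using this.trans hdeg

theorem card_filter_pow_eq_self_le {K : Type*} [Field K] [Fintype K] [DecidableEq K]
    {q : ℕ} (hq : 1 < q) : #{x : K | x ^ q = x} ≤ q := by
  have := card_filter_eval_eq_zero_le (FiniteField.X_pow_card_sub_X_ne_zero K hq)
  simpa [FiniteField.X_pow_card_sub_X_natDegree_eq K hq, sub_eq_zero] using this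

namespace FiniteField

variable {K : Type*} [Field K] [Fintype K] {q n s : ℕ}

theorem ne_zero_of_card_eq_pow (hK : Fintype.card K = q ^ n) : n ≠ 0 := by
  rintro rfl
  exact (Fintype.one_lt_card (α := K)).ne' (by simpa using hK)

theorem exists_ringHom_pow_eq (hq : IsPrimePow q) (hK : Fintype.card K = q ^ n)
    (a : ℕ) : ∃ φ : K →+* K, ∀ x, φ x = x ^ q ^ a := by
  obtain ⟨p, e, hp, -, rfl⟩ := hq
  have : Fact p.Prime := ⟨hp.nat_prime⟩
  have : CharP K p := charP_of_card_eq_prime_pow (hK.trans (pow_mul p e n).symm)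
  exact ⟨iterateFrobenius K p (e * a), fun x => by rw [iterateFrobenius_def, pow_mul]⟩

theorem periodic_pow_pow (hK : Fintype.card K = q ^ n) (x : K) :
    Function.Periodic (fun a => x ^ q ^ a) n := fun a => by
  show x ^ q ^ (a + n) = x ^ q ^ a
  rw [pow_add, mul_comm, pow_mul, ← hK, pow_card]

theorem pow_pow_pow_eq_self (hK : Fintype.card K = q ^ n) (s : ℕ) (x : K) :
    x ^ (q ^ s) ^ n = x := by
  rw [← pow_mul, mul_comm, pow_mul, ← hK, pow_card_pow]

theorem pow_pow_eq_self_iff_of_coprime (hK : Fintype.card K = q ^ n) (hsn : s.Coprime n)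
    (x : K) : x ^ q ^ s = x ↔ x ^ q = x := by
  have hperiodic : ∀ k, Function.IsPeriodicPt (· ^ q) k x ↔ x ^ q ^ k = x := fun k => by
    rw [Function.IsPeriodicPt, Function.IsFixedPt, pow_iterate]
  refine ⟨fun h => ?_, fun h => ?_⟩
  · have := ((hperiodic s).2 h).gcd ((hperiodic n).2 (hK ▸ pow_card x))
    rw [hsn.gcd_eq_one] at this
    simpa using (hperiodic 1).1 this
  · exact (hperiodic s).1 (Function.IsFixedPt.isPeriodicPt h s)

theorem sum_pow_pow_pow_eq_sum_pow_pow (hK : Fintype.card K = q ^ n) (hsn : s.Coprime n)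
    (x : K) : ∑ i ∈ range n, x ^ (q ^ s) ^ i = ∑ i ∈ range n, x ^ q ^ i := by
  simp_rw [← pow_mul]
  exact Function.Periodic.sum_range_mul_left_of_coprime (periodic_pow_pow hK x) hsn

theorem pow_geomSum_pow_eq_pow_geomSum (hK : Fintype.card K = q ^ n) (hsn : s.Coprime n)
    (x : K) : x ^ ∑ i ∈ range n, (q ^ s) ^ i = x ^ ∑ i ∈ range n, q ^ i := by
  simp_rw [← prod_pow_eq_pow_sum, ← pow_mul]
  exact Function.Periodic.prod_range_mul_left_of_coprime (periodic_pow_pow hK x) hsn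

theorem exists_pow_sub_eq_of_sum_eq_zero (hq : IsPrimePow q) (hK : Fintype.card K = q ^ n)
    (hsn : s.Coprime n) {w : K} (hw : ∑ i ∈ range n, w ^ (q ^ s) ^ i = 0) :
    ∃ a, a ^ q ^ s - a = w := by
  classical
  obtain ⟨φ, hφ⟩ := exists_ringHom_pow_eq hq hK s
  have hn := ne_zero_of_card_eq_pow hK
  let f : K →+ K := φ.toAddMonoidHom - AddMonoidHom.id K
  have hf : ∀ a, f a = a ^ q ^ s - a := fun a => by simp [f, hφ]
  have hfS : ∀ a, f a ∈ ({v : K | ∑ i ∈ range n, v ^ q ^ i = 0} : Finset K) := fun a => by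
    rw [mem_filter, hf, ← sum_pow_pow_pow_eq_sum_pow_pow hK hsn]
    exact ⟨mem_univ _, sum_pow_pow_sub_self_eq_zero φ hφ (pow_pow_pow_eq_self hK s a)⟩
  have hker : Nat.card f.ker ≤ q := by
    refine le_trans ?_ (card_filter_pow_eq_self_le (K := K) hq.one_lt)
    rw [← Nat.card_eq_finsetCard]
    refine Nat.card_mono (Set.toFinite _) fun a ha => ?_
    simpa [hf, sub_eq_zero, pow_pow_eq_self_iff_of_coprime hK hsn] using ha
  obtain ⟨a, ha⟩ := f.mem_range_of_card_mul_card_ker_le hfS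
    (calc _ ≤ q ^ (n - 1) * q :=
          Nat.mul_le_mul (card_filter_sum_pow_pow_eq_zero_le hq.one_lt hn) hker
      _ = Nat.card K := by
          rw [← pow_succ, Nat.sub_add_cancel (by omega), Nat.card_eq_fintype_card, hK])
    (by rw [mem_filter, ← sum_pow_pow_pow_eq_sum_pow_pow hK hsn]; exact ⟨mem_univ _, hw⟩)
  exact ⟨a, (hf a).symm.trans ha⟩

theorem exists_pow_eq_mul_of_pow_geomSum_eq_one (hq : 1 < q) (hK : Fintype.card K = q ^ n)
    (hsn : s.Coprime n) {z : K} (hz : z ^ ∑ i ∈ range n, (q ^ s) ^ i = 1) :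
    ∃ u : K, u ≠ 0 ∧ u ^ q ^ s = z * u := by
  classical
  have hn := ne_zero_of_card_eq_pow hK
  have hQ : 1 ≤ q ^ s := Nat.one_le_pow _ _ (by omega)
  have hE : (∑ i ∈ range n, q ^ i) * (q - 1) + 1 = q ^ n := by
    simpa [Nat.sub_add_cancel hq.le] using geom_sum_mul_add (q - 1) n
  have hEs : (∑ i ∈ range n, (q ^ s) ^ i) * (q ^ s - 1) + 1 = (q ^ s) ^ n := by
    simpa [Nat.sub_add_cancel hQ] using geom_sum_mul_add (q ^ s - 1) n
  have hcard : Nat.card Kˣ = q ^ n - 1 := by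
    rw [Nat.card_eq_fintype_card, Fintype.card_units, hK]
  let f : Kˣ →* Kˣ := powMonoidHom (q ^ s - 1)
  have hfS : ∀ u, f u ∈ ({v : Kˣ | v ^ ∑ i ∈ range n, q ^ i = 1} : Finset Kˣ) := fun u => by
    rw [mem_filter, Units.ext_iff]
    refine ⟨mem_univ _, ?_⟩
    simp only [f, powMonoidHom_apply, Units.val_pow_eq_pow_val, Units.val_one]
    rw [← pow_geomSum_pow_eq_pow_geomSum hK hsn, ← pow_mul]
    apply mul_left_cancel₀ u.ne_zero
    rw [mul_one, ← pow_succ', mul_comm, hEs, pow_pow_pow_eq_self hK]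
  have hker : Nat.card f.ker = q - 1 := by
    rw [IsCyclic.card_powMonoidHom_ker, hcard, Nat.pow_sub_one_gcd_pow_sub_one,
      Nat.Coprime.gcd_eq_one hsn.symm, pow_one]
  have hz0 : z ≠ 0 := by
    rintro rfl
    refine zero_ne_one ((zero_pow ?_).symm.trans hz)
    exact (sum_pos (fun i _ => by positivity) (nonempty_range_iff.2 hn)).ne'
  obtain ⟨u, hu⟩ := f.mem_range_of_card_mul_card_ker_le hfS
    (by
      rw [hker, hcard, ← hE, Nat.add_sub_cancel]
      exact Nat.mul_le_mul_right _ (IsCyclic.card_pow_eq_one_le (by positivity)))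
    (h := Units.mk0 z hz0)
    (by
      rw [mem_filter, Units.ext_iff]
      simpa [← pow_geomSum_pow_eq_pow_geomSum hK hsn] using hz)
  refine ⟨u, u.ne_zero, ?_⟩
  have hu' : (u : K) ^ (q ^ s - 1) = z := by simpa [f] using congrArg Units.val hu
  rw [← hu', ← pow_succ, Nat.sub_add_cancel hQ]

theorem sum_pow_geomSum_eq_zero_iff (hq : IsPrimePow q) (hK : Fintype.card K = q ^ n)
    (hsn : s.Coprime n) (z : K) :
    ∑ i ∈ range n, z ^ ∑ j ∈ range i, (q ^ s) ^ j = 0 ↔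
      ∃ y : K, y ≠ 0 ∧ y ^ q ^ s ≠ y ∧ y ^ q ^ s - y = z * (y - y ^ (q ^ s) ^ (n - 1)) := by
  obtain ⟨φ, hφ⟩ := exists_ringHom_pow_eq hq hK s
  have hn := ne_zero_of_card_eq_pow hK
  refine ⟨fun hz => ?_, fun ⟨y, _, hy, h⟩ =>
    sum_eq_zero_of_pow_sub_eq_mul φ hφ hn (pow_pow_pow_eq_self hK s) hy h⟩
  obtain ⟨u, hu0, hu⟩ := exists_pow_eq_mul_of_pow_geomSum_eq_one hq.one_lt hK hsn
    (pow_geomSum_eq_one_of_sum_eq_zero φ hφ hz)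
  obtain ⟨a, rfl⟩ := exists_pow_sub_eq_of_sum_eq_zero hq hK hsn
    (by rw [sum_pow_pow_eq_mul hu, hz, zero_mul])
  have hsub : (a ^ q ^ s) ^ q ^ s - a ^ q ^ s = (a ^ q ^ s - a) ^ q ^ s := by
    simp only [← hφ, map_sub]
  have hne : (a ^ q ^ s) ^ q ^ s ≠ a ^ q ^ s := by
    rw [ne_eq, ← sub_eq_zero, hsub]
    exact pow_ne_zero _ hu0
  have ha : (a ^ q ^ s) ^ (q ^ s) ^ (n - 1) = a := by
    rw [← pow_mul, ← pow_succ', Nat.sub_add_cancel (Nat.one_le_iff_ne_zero.2 hn),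
      pow_pow_pow_eq_self hK]
  -- `y := a ^ σ` has `y - y ^ σ ^ (n - 1) = a ^ σ - a = u`
  refine ⟨a ^ q ^ s, fun h0 => hne (by rw [h0, zero_pow (pow_pos hq.pos s).ne']), hne, ?_⟩
  rw [ha, hsub, hu]

end FiniteField

def IsScattered {K : Type*} [Field K] (q : ℕ) (f : K → K) : Prop :=
  ∀ x t : K, x ≠ 0 → t ≠ 0 → x * f t = t * f x → ∃ c : K, c ^ q = c ∧ x = c * t

theorem isScattered_iff {K : Type*} [Field K] {q : ℕ} {f : K → K} :
    IsScattered q f ↔ ∀ t ≠ 0, ∀ y ≠ 0, y * t * f t = t * f (y * t) → y ^ q = y := by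
  refine ⟨fun h t ht y hy heq => ?_, fun h x t hx ht heq => ?_⟩
  · obtain ⟨c, hc, hyc⟩ := h (y * t) t (mul_ne_zero hy ht) ht heq
    rwa [mul_right_cancel₀ ht hyc]
  · refine ⟨x / t, h t ht (x / t) (div_ne_zero hx ht) ?_, (div_mul_cancel₀ x ht).symm⟩
    rwa [div_mul_cancel₀ x ht]

theorem mul_add_pow_eq_mul_add_pow_iff {K : Type*} [Field K] {Q Q' : ℕ} (hQ : Q ≤ Q') (δ : K)
    {t : K} (ht : t ≠ 0) (y : K) :
    y * t * (t ^ Q + δ * t ^ Q') = t * ((y * t) ^ Q + δ * (y * t) ^ Q') ↔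
      y ^ Q - y = δ * t ^ (Q' - Q) * (y - y ^ Q') := by
  have hsplit : t ^ Q' = t ^ (Q' - Q) * t ^ Q := by rw [← pow_add, Nat.sub_add_cancel hQ]
  rw [← sub_eq_zero, ← sub_eq_zero (a := y ^ Q - y)]
  have hfactor : y * t * (t ^ Q + δ * t ^ Q') - t * ((y * t) ^ Q + δ * (y * t) ^ Q') =
      -(t * t ^ Q) * (y ^ Q - y - δ * t ^ (Q' - Q) * (y - y ^ Q')) := by
    rw [mul_pow, mul_pow, hsplit]
    ring
  rw [hfactor, mul_eq_zero, neg_eq_zero, mul_eq_zero]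
  simp [ht]

open Finset in
theorem stmt_2_general (q n s : ℕ) (hq : IsPrimePow q) (hn : 3 ≤ n)
    (hsn : Nat.Coprime s n) (K : Type*) [Field K] [Fintype K]
    (hK : Fintype.card K = q ^ n) (δ : K) :
    (∀ x t : K, x ≠ 0 → t ≠ 0 →
      x * (t ^ (q ^ s) + δ * t ^ ((q ^ s) ^ (n - 1))) =
        t * (x ^ (q ^ s) + δ * x ^ ((q ^ s) ^ (n - 1))) →
      ∃ c : K, c ^ q = c ∧ x = c * t) ↔
    ¬∃ x : K, x ≠ 0 ∧
      ∑ i ∈ Finset.range n,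
        (δ * x ^ ((q ^ s) ^ (n - 1) - q ^ s)) ^ (∑ j ∈ Finset.range i, (q ^ s) ^ j) = 0 := by
  have hQ : q ^ s ≤ (q ^ s) ^ (n - 1) := Nat.le_self_pow (by omega) _
  change IsScattered q (fun x => x ^ q ^ s + δ * x ^ (q ^ s) ^ (n - 1)) ↔ _
  simp only [isScattered_iff, FiniteField.sum_pow_geomSum_eq_zero_iff hq hK hsn, not_exists,
    not_and]
  refine forall₂_congr fun t ht => forall₂_congr fun y _ => ?_
  rw [mul_add_pow_eq_mul_add_pow_iff hQ δ ht,
    ← FiniteField.pow_pow_eq_self_iff_of_coprime hK hsn]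
  tauto

open Finset in
/-- `f(x) = x^σ + δ x^(σ^(n-1))` is scattered iff there is no nonzero `x` with
`∑_{i=0}^{n-1} z^{e_i} = 0`, where `z = δ x^(σ^(n-1)-σ)` and `e_i = ∑_{j<i} σ^j`. -/
theorem stmt_2 (q n s : ℕ) (hq : IsPrimePow q) (hn : 3 ≤ n) (hs : 0 < s)
    (hsn : Nat.Coprime s n) (K : Type*) [Field K] [Fintype K]
    (hK : Fintype.card K = q ^ n) (δ : K) :
    (∀ x t : K, x ≠ 0 → t ≠ 0 →
      x * (t ^ (q ^ s) + δ * t ^ ((q ^ s) ^ (n - 1))) =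
        t * (x ^ (q ^ s) + δ * x ^ ((q ^ s) ^ (n - 1))) →
      ∃ c : K, c ^ q = c ∧ x = c * t) ↔
    ¬∃ x : K, x ≠ 0 ∧
      ∑ i ∈ Finset.range n,
        (δ * x ^ ((q ^ s) ^ (n - 1) - q ^ s)) ^ (∑ j ∈ Finset.range i, (q ^ s) ^ j) = 0 :=
  stmt_2_general q n s hq hn hsn K hK δ
end

section
/- Suppose n is odd. Then the set of values x^(σ^(n−1)−σ) as x ranges over the nonzero elements of K equals the set of all y ∈ K with N(y) = 1. -/
/-! In the cyclic group `Kˣ` of order `N = q^n - 1` the `e`-th powers are exactly the elements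
killed by `N / gcd(N, e)`. Here `e = σ^(n-1) - σ = q^s (q^(s(n-2)) - 1)`, and since `q` is prime
to `N`, `gcd(N, e) = q^gcd(n, s(n-2)) - 1 = q - 1`: the exponent `s(n-2)` is prime to `n`
because `s` is and `n` is odd. -/

theorem IsCyclic.range_powMonoidHom_eq_ker {G : Type*} [CommGroup G] [IsCyclic G] [Finite G]
    (d : ℕ) :
    (powMonoidHom d : G →* G).range =
      (powMonoidHom (Nat.card G / (Nat.card G).gcd d)).ker := by
  set N := Nat.card G
  have hg : N.gcd d ∣ N := Nat.gcd_dvd_left N d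
  refine Subgroup.eq_of_le_of_card_ge ?_ ?_
  · rintro _ ⟨x, rfl⟩
    have hexp : d * (N / N.gcd d) = N * (d / N.gcd d) := by
      rw [← Nat.mul_div_assoc _ hg, mul_comm, Nat.mul_div_assoc _ (Nat.gcd_dvd_right N d)]
    rw [MonoidHom.mem_ker, powMonoidHom_apply, powMonoidHom_apply, ← pow_mul, hexp, pow_mul,
      pow_card_eq_one', one_pow]
  · rw [IsCyclic.card_powMonoidHom_ker, IsCyclic.card_powMonoidHom_range,
      Nat.gcd_eq_right (Nat.div_dvd_of_dvd hg)]

theorem FiniteField.image_pow_setOf_ne_zero {K : Type*} [Field K] [Fintype K] (d : ℕ) :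
    (fun x : K => x ^ d) '' {x | x ≠ 0} =
      {y | y ^ ((Fintype.card K - 1) / (Fintype.card K - 1).gcd d) = 1} := by
  set m := (Fintype.card K - 1) / (Fintype.card K - 1).gcd d
  have hN : 0 < Fintype.card K - 1 := by have := Fintype.one_lt_card (α := K); omega
  have hm : m ≠ 0 := (Nat.div_pos (Nat.gcd_le_left d hN) (Nat.gcd_pos_of_pos_left d hN)).ne'
  have key := IsCyclic.range_powMonoidHom_eq_ker (G := Kˣ) d
  rw [Nat.card_units, Nat.card_eq_fintype_card] at key
  ext y
  simp only [Set.mem_image, Set.mem_ofPred_eq]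
  constructor
  · rintro ⟨x, hx, rfl⟩
    have hmem : Units.mk0 x hx ^ d ∈ (powMonoidHom m).ker := key ▸ ⟨_, rfl⟩
    simpa [Units.ext_iff] using hmem
  · intro hy
    have hy0 : y ≠ 0 := by rintro rfl; simp [zero_pow hm] at hy
    obtain ⟨u, hu⟩ : Units.mk0 y hy0 ∈ (powMonoidHom d).range :=
      key ▸ by simpa [Units.ext_iff] using hy
    exact ⟨u, u.ne_zero, by simpa [Units.ext_iff] using hu⟩

theorem Nat.pow_pow_pred_sub_pow {q s n : ℕ} (hn : 2 ≤ n) :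
    (q ^ s) ^ (n - 1) - q ^ s = q ^ s * (q ^ (s * (n - 2)) - 1) := by
  rw [Nat.mul_sub, mul_one, pow_mul, ← pow_succ']
  congr 2
  omega

theorem Nat.gcd_pow_sub_one_pow_pow_pred_sub_pow {q s n : ℕ} (hq : 0 < q) (hn : 2 ≤ n)
    (hodd : Odd n) (hsn : s.Coprime n) :
    (q ^ n - 1).gcd ((q ^ s) ^ (n - 1) - q ^ s) = q - 1 := by
  have hqn : (q ^ n - 1).Coprime (q ^ n) :=
    (Nat.coprime_self_sub_left (Nat.one_le_pow _ _ hq)).mpr (Nat.coprime_one_left _)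
  have hcop : (q ^ s).Coprime (q ^ n - 1) :=
    ((hqn.coprime_dvd_right (dvd_pow_self q (by omega))).pow_right s).symm
  have hn2 : (n - 2).Coprime n :=
    (Nat.coprime_self_sub_left hn).mpr (Nat.coprime_two_left.mpr hodd)
  have hexp : n.gcd (s * (n - 2)) = 1 := (hsn.mul_left hn2).symm
  rw [Nat.pow_pow_pred_sub_pow hn, Nat.gcd_comm, hcop.gcd_mul_left_cancel, Nat.gcd_comm,
    Nat.pow_sub_one_gcd_pow_sub_one, hexp, pow_one]

theorem stmt_12_general (q n s : ℕ) (hq : IsPrimePow q) (hn : 3 ≤ n) (hodd : Odd n)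
    (hsn : Nat.Coprime s n) (K : Type*) [Field K] [Fintype K]
    (hK : Fintype.card K = q ^ n) :
    (fun x : K => x ^ ((q ^ s) ^ (n - 1) - q ^ s)) '' {x : K | x ≠ 0} =
      {y : K | y ^ ((q ^ n - 1) / (q - 1)) = 1} := by
  rw [FiniteField.image_pow_setOf_ne_zero, hK,
    Nat.gcd_pow_sub_one_pow_pow_pred_sub_pow hq.pos (by omega) hodd hsn]

/-- For odd `n`, the values `x^(σ^(n-1) - σ)`, `x ≠ 0`, are exactly the
elements of norm one. -/
theorem stmt_12 (q n s : ℕ) (hq : IsPrimePow q) (hn : 3 ≤ n) (hodd : Odd n)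
    (hs : 0 < s) (hsn : Nat.Coprime s n) (K : Type*) [Field K] [Fintype K]
    (hK : Fintype.card K = q ^ n) :
    (fun x : K => x ^ ((q ^ s) ^ (n - 1) - q ^ s)) '' {x : K | x ≠ 0} =
      {y : K | y ^ ((q ^ n - 1) / (q - 1)) = 1} :=
  stmt_12_general q n s hq hn hodd hsn K hK
end
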